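/- arXiv:2407.00846 — 3 statements merged into one kernel-verified Lean document; each statement's English description precedes it below -/
import Mathlib

section
/- With the composite variable ỹ defined as Y on {D=0} and as constant c on {D=1} where c is below the support of Y on {D=0}, if P(D=1) < τ then the value of the τ-th quantile of ỹ does not depend on the choice of c: for any two constants c₁, c₂ both strictly below the infimum of the support of Y on {D=0}, the corresponding composite variables have the same τ-th quantile. -/
/-!
Let `S = {D = 1}` and let `b` lie strictly between the constants and the essential infimum of
`Y` on `{D = 0}`. Below `b` the sublevel sets of either composite variable are contained in `S`
up to a null set, so their probability is at most `P(S) < τ` and no `y < b` qualifies for the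
quantile. From `b` on, both composites lie below `y` on all of `S` and agree off `S`, so their
sublevel sets coincide almost everywhere. The two sets whose infima define the quantiles are
therefore equal.
-/

open MeasureTheory Set

/-- The τ-th quantile of a real random variable `Z` under `μ`:
`inf {y : P(Z ≤ y) ≥ τ}`. -/
noncomputable def quantileOf {Ω : Type*} [MeasurableSpace Ω] (μ : Measure Ω)
    (Z : Ω → ℝ) (τ : ℝ) : ℝ :=
  sInf {y : ℝ | τ ≤ (μ {ω | Z ω ≤ y}).toReal}

section

variable {Ω : Type*} [MeasurableSpace Ω] {μ : Measure Ω} {S : Set Ω} {Z Z₁ Z₂ : Ω → ℝ}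
  {b y τ : ℝ}

lemma setOf_le_ae_le_of_lt_of_ae_le_off (hZ : ∀ᵐ ω ∂μ, ω ∉ S → b ≤ Z ω) (hy : y < b) :
    {ω | Z ω ≤ y} ≤ᵐ[μ] S := by
  filter_upwards [hZ] with ω hω hle
  by_contra hωS
  exact (hle.trans_lt hy).not_ge (hω hωS)

lemma toReal_measure_setOf_le_lt [IsFiniteMeasure μ] (hS : (μ S).toReal < τ)
    (hZ : ∀ᵐ ω ∂μ, ω ∉ S → b ≤ Z ω) (hy : y < b) : (μ {ω | Z ω ≤ y}).toReal < τ :=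
  (ENNReal.toReal_mono (measure_ne_top μ S)
    (measure_mono_ae (setOf_le_ae_le_of_lt_of_ae_le_off hZ hy))).trans_lt hS

lemma setOf_le_ae_eq_of_le_on_of_ae_eq_off (h₁ : ∀ ω ∈ S, Z₁ ω ≤ y) (h₂ : ∀ ω ∈ S, Z₂ ω ≤ y)
    (hoff : ∀ᵐ ω ∂μ, ω ∉ S → Z₁ ω = Z₂ ω) : {ω | Z₁ ω ≤ y} =ᵐ[μ] {ω | Z₂ ω ≤ y} := by
  filter_upwards [hoff] with ω hω
  by_cases hωS : ω ∈ S
  · exact propext (iff_of_true (h₁ ω hωS) (h₂ ω hωS))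
  · change (Z₁ ω ≤ y) = (Z₂ ω ≤ y)
    rw [hω hωS]

theorem quantileOf_eq_of_lt_on_of_ae_eq_off [IsFiniteMeasure μ] (hS : (μ S).toReal < τ)
    (h₁ : ∀ ω ∈ S, Z₁ ω < b) (h₂ : ∀ ω ∈ S, Z₂ ω < b)
    (hoff : ∀ᵐ ω ∂μ, ω ∉ S → b ≤ Z₁ ω ∧ Z₁ ω = Z₂ ω) :
    quantileOf μ Z₁ τ = quantileOf μ Z₂ τ := by
  have hb₁ : ∀ᵐ ω ∂μ, ω ∉ S → b ≤ Z₁ ω := hoff.mono fun ω h hωS ↦ (h hωS).1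
  have hb₂ : ∀ᵐ ω ∂μ, ω ∉ S → b ≤ Z₂ ω := hoff.mono fun ω h hωS ↦ (h hωS).2 ▸ (h hωS).1
  refine congrArg sInf (Set.ext fun y ↦ ?_)
  rcases lt_or_ge y b with hy | hy
  · exact iff_of_false (toReal_measure_setOf_le_lt hS hb₁ hy).not_ge
      (toReal_measure_setOf_le_lt hS hb₂ hy).not_ge
  · have hsub : {ω | Z₁ ω ≤ y} =ᵐ[μ] {ω | Z₂ ω ≤ y} :=
      setOf_le_ae_eq_of_le_on_of_ae_eq_off (fun ω hω ↦ (h₁ ω hω).le.trans hy)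
        (fun ω hω ↦ (h₂ ω hω).le.trans hy) (hoff.mono fun ω h hωS ↦ (h hωS).2)
    change τ ≤ (μ _).toReal ↔ τ ≤ (μ _).toReal
    rw [measure_congr hsub]

end

theorem survival_incorporated_quantile_indep_of_death_value_general
    {Ω : Type*} [MeasurableSpace Ω] (μ : Measure Ω) [IsProbabilityMeasure μ]
    (D : Ω → Bool) (Y : Ω → ℝ) (c₁ c₂ τ : ℝ)
    -- both constants are strictly below the infimum of the support of Y on {D = 0}:
    (hc : ∃ b : ℝ, c₁ < b ∧ c₂ < b ∧ ∀ᵐ ω ∂μ, D ω = false → b ≤ Y ω)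
    -- P(D = 1) < τ:
    (hdeath : (μ {ω | D ω = true}).toReal < τ)
    (Ytilde₁ Ytilde₂ : Ω → ℝ)
    (h₁ : ∀ ω, Ytilde₁ ω = if D ω = true then c₁ else Y ω)
    (h₂ : ∀ ω, Ytilde₂ ω = if D ω = true then c₂ else Y ω) :
    quantileOf μ Ytilde₁ τ = quantileOf μ Ytilde₂ τ := by
  obtain ⟨b, hc₁, hc₂, hY⟩ := hc
  refine quantileOf_eq_of_lt_on_of_ae_eq_off (S := {ω | D ω = true}) (b := b) hdeath
    (fun ω (hω : D ω = true) ↦ by simpa [h₁, hω] using hc₁)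
    (fun ω (hω : D ω = true) ↦ by simpa [h₂, hω] using hc₂) ?_
  filter_upwards [hY] with ω hω hωS
  have hDω : D ω = false := by simpa using hωS
  simpa [h₁, h₂, hDω] using hω hDω

theorem survival_incorporated_quantile_indep_of_death_value
    {Ω : Type*} [MeasurableSpace Ω] (μ : Measure Ω) [IsProbabilityMeasure μ]
    (D : Ω → Bool) (Y : Ω → ℝ) (c₁ c₂ τ : ℝ) (hτ : τ ∈ Set.Ioo (0 : ℝ) 1)
    (hD : Measurable D) (hY : Measurable Y)
    -- both constants are strictly below the infimum of the support of Y on {D = 0}: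
    (hc : ∃ b : ℝ, c₁ < b ∧ c₂ < b ∧ ∀ᵐ ω ∂μ, D ω = false → b ≤ Y ω)
    -- P(D = 1) < τ:
    (hdeath : (μ {ω | D ω = true}).toReal < τ)
    (Ytilde₁ Ytilde₂ : Ω → ℝ)
    (h₁ : ∀ ω, Ytilde₁ ω = if D ω = true then c₁ else Y ω)
    (h₂ : ∀ ω, Ytilde₂ ω = if D ω = true then c₂ else Y ω) :
    quantileOf μ Ytilde₁ τ = quantileOf μ Ytilde₂ τ :=
  survival_incorporated_quantile_indep_of_death_value_general μ D Y c₁ c₂ τ hc hdeath Ytilde₁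
    Ytilde₂ h₁ h₂
end

section
/- (Identification of quantiles, point treatment case.) Let (L, A, Ỹ) be random variables where A ∈ {0,1}, and suppose: (i) no unmeasured confounding: A ⊥ Ỹ^(a) given L; (ii) consistency: on {A = a}, Ỹ = Ỹ^(a); (iii) positivity: P(A = a | L) ≥ ε > 0 almost surely. Then for any q ∈ ℝ, E[ 1{A=a} / P(A=a|L) · (1{Ỹ ≤ q} − τ) ] = P(Ỹ^(a) ≤ q) − τ. In particular, if q_τ^(a) is such that P(Ỹ^(a) ≤ q_τ^(a)) = τ, then the weighted estimating function has mean zero at q_τ^(a). -/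
/-!
The propensity score `e = P(A = a | L)` is `σ(L)`-measurable and bounded below by `ε > 0`, so
`1 / e` is bounded and can be pulled out of the conditional expectation given `L`:
`E[1{A = a} f / e] = E[E[1{A = a} f | L] / e]`. Conditional independence of `A` and `Ỹ^(a)` given
`L` factorizes `E[1{A = a} (1{Ỹ^(a) ≤ q} - τ) | L] = e · E[1{Ỹ^(a) ≤ q} - τ | L]`, so the weight
cancels and the tower property leaves `P(Ỹ^(a) ≤ q) - τ`. Consistency lets `Ỹ` replace `Ỹ^(a)`
on `{A = a}`, the only place where the integrand is nonzero.
-/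

open MeasureTheory ProbabilityTheory

section InverseProbabilityWeighting

variable {Ω : Type*} {m m₀ : MeasurableSpace Ω} {μ : Measure Ω} {s t : Set Ω}

theorem integral_indicator_mul_div_condExp [IsFiniteMeasure μ] (hm : m ≤ m₀)
    (hs : MeasurableSet[m₀] s) {f : Ω → ℝ} (hf : Integrable f μ) {ε : ℝ} (hε : 0 < ε)
    (hpos : ∀ᵐ ω ∂μ, ε ≤ μ[s.indicator (1 : Ω → ℝ) | m] ω)
    (hfac : μ[s.indicator (1 : Ω → ℝ) * f | m] =ᵐ[μ] μ[s.indicator 1 | m] * μ[f | m]) :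
    ∫ ω, s.indicator 1 ω * f ω / μ[s.indicator 1 | m] ω ∂μ = ∫ ω, f ω ∂μ := by
  set e := μ[s.indicator (1 : Ω → ℝ) | m]
  have he_inv : StronglyMeasurable[m] e⁻¹ :=
    stronglyMeasurable_condExp.measurable.inv.stronglyMeasurable
  have he_inv_le : ∀ᵐ ω ∂μ, ‖e⁻¹ ω‖ ≤ ε⁻¹ := by
    filter_upwards [hpos] with ω hω
    rw [Pi.inv_apply, norm_inv, Real.norm_of_nonneg (hε.le.trans hω)]
    exact inv_anti₀ hε hω
  have hsf : Integrable (s.indicator 1 * f) μ := by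
    have : s.indicator 1 * f = s.indicator f := by
      ext ω; by_cases h : ω ∈ s <;> simp [h]
    exact this ▸ hf.indicator hs
  calc ∫ ω, s.indicator 1 ω * f ω / e ω ∂μ
      = ∫ ω, μ[e⁻¹ * (s.indicator 1 * f) | m] ω ∂μ := by
        rw [integral_condExp hm]; simp only [Pi.mul_apply, Pi.inv_apply, div_eq_inv_mul]
    _ = ∫ ω, (e⁻¹ * (e * μ[f | m])) ω ∂μ := by
        refine integral_congr_ae ?_
        filter_upwards [condExp_stronglyMeasurable_mul_of_bound hm he_inv hsf _ he_inv_le, hfac]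
          with ω h_pull h_fac
        rw [h_pull, Pi.mul_apply, h_fac]; rfl
    _ = ∫ ω, μ[f | m] ω ∂μ := by
        refine integral_congr_ae ?_
        filter_upwards [hpos] with ω hω
        simp only [Pi.mul_apply, Pi.inv_apply]
        rw [inv_mul_cancel_left₀ (hε.trans_le hω).ne']
    _ = ∫ ω, f ω ∂μ := integral_condExp hm

theorem condExp_indicator_mul_indicator_sub_const [IsFiniteMeasure μ] (hm : m ≤ m₀)
    (hs : MeasurableSet[m₀] s) (ht : MeasurableSet[m₀] t)
    (hst : μ[(s ∩ t).indicator (1 : Ω → ℝ) | m] =ᵐ[μ] μ[s.indicator 1 | m] * μ[t.indicator 1 | m])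
    (c : ℝ) :
    μ[s.indicator 1 * (t.indicator 1 - fun _ ↦ c) | m]
      =ᵐ[μ] μ[s.indicator 1 | m] * μ[t.indicator 1 - fun _ ↦ c | m] := by
  have hs_int : Integrable (s.indicator (1 : Ω → ℝ)) μ := (integrable_const 1).indicator hs
  have ht_int : Integrable (t.indicator (1 : Ω → ℝ)) μ := (integrable_const 1).indicator ht
  have hst_int : Integrable ((s ∩ t).indicator (1 : Ω → ℝ)) μ :=
    (integrable_const 1).indicator (hs.inter ht)
  have hsc_int : Integrable (s.indicator (1 : Ω → ℝ) * fun _ ↦ c) μ := hs_int.mul_const c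
  have hsplit : s.indicator 1 * (t.indicator 1 - fun _ ↦ c)
      = (s ∩ t).indicator 1 - s.indicator 1 * fun _ ↦ c := by
    rw [Set.inter_indicator_one, mul_sub]
  filter_upwards [condExp_sub hst_int hsc_int m,
    condExp_mul_of_stronglyMeasurable_right (m := m) stronglyMeasurable_const hsc_int hs_int,
    condExp_sub ht_int (integrable_const c) m, hst] with ω h_sub h_pull h_sub' h_indep
  simp only [hsplit, h_sub, h_sub', Pi.sub_apply, h_pull, h_indep, condExp_const hm, Pi.mul_apply]
  ring

theorem integral_indicator_mul_indicator_sub_const_div_condExp [IsProbabilityMeasure μ]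
    (hm : m ≤ m₀) (hs : MeasurableSet[m₀] s) (ht : MeasurableSet[m₀] t)
    (hst : μ[(s ∩ t).indicator (1 : Ω → ℝ) | m] =ᵐ[μ] μ[s.indicator 1 | m] * μ[t.indicator 1 | m])
    {ε : ℝ} (hε : 0 < ε) (hpos : ∀ᵐ ω ∂μ, ε ≤ μ[s.indicator (1 : Ω → ℝ) | m] ω) (c : ℝ) :
    ∫ ω, s.indicator 1 ω * (t.indicator 1 - fun _ ↦ c : Ω → ℝ) ω / μ[s.indicator 1 | m] ω ∂μ
      = μ.real t - c := by
  have ht_int : Integrable (t.indicator (1 : Ω → ℝ)) μ := (integrable_const 1).indicator ht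
  rw [integral_indicator_mul_div_condExp hm hs (ht_int.sub (integrable_const c)) hε hpos
      (condExp_indicator_mul_indicator_sub_const hm hs ht hst c),
    integral_sub' ht_int (integrable_const c), integral_indicator_one ht, integral_const,
    probReal_univ, one_smul]

end InverseProbabilityWeighting

theorem iptw_quantile_identification_point_treatment_general
    {Ω : Type*} [MeasurableSpace Ω] [StandardBorelSpace Ω]
    (μ : Measure Ω) [IsProbabilityMeasure μ]
    {p : ℕ} (L : Ω → (Fin p → ℝ)) (A : Ω → Bool) (a : Bool)
    (Ytilde Ya : Ω → ℝ) (τ : ℝ)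
    (hA : Measurable A) (hYa : Measurable Ya)
    (hle : MeasurableSpace.comap L inferInstance ≤ (inferInstance : MeasurableSpace Ω))
    -- (i) no unmeasured confounding: A ⊥ Ỹ^(a) | L
    (hNUC : CondIndepFun (MeasurableSpace.comap L inferInstance) hle A Ya μ)
    -- (ii) consistency: on {A = a}, Ỹ = Ỹ^(a)
    (hcons : ∀ᵐ ω ∂μ, A ω = a → Ytilde ω = Ya ω)
    -- the propensity score P(A = a | L) as a conditional expectation given σ(L)
    (e : Ω → ℝ)
    (he : e = μ[(fun ω => if A ω = a then (1 : ℝ) else 0) |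
          MeasurableSpace.comap L inferInstance])
    -- (iii) positivity: P(A = a | L) ≥ ε > 0 a.s.
    (hpos : ∃ ε : ℝ, 0 < ε ∧ ∀ᵐ ω ∂μ, ε ≤ e ω) :
    (∀ q : ℝ,
      ∫ ω, (if A ω = a then (1 : ℝ) else 0) / e ω *
          ((if Ytilde ω ≤ q then (1 : ℝ) else 0) - τ) ∂μ
        = (μ {ω | Ya ω ≤ q}).toReal - τ) ∧
    (∀ qτ : ℝ, (μ {ω | Ya ω ≤ qτ}).toReal = τ →
      ∫ ω, (if A ω = a then (1 : ℝ) else 0) / e ω *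
          ((if Ytilde ω ≤ qτ then (1 : ℝ) else 0) - τ) ∂μ = 0) := by
  obtain ⟨ε, hε, hεe⟩ := hpos
  set S := A ⁻¹' {a}
  have he_S : e = μ[S.indicator 1 | MeasurableSpace.comap L inferInstance] := by
    rw [he]; congr 1; ext ω; by_cases h : A ω = a <;> simp [S, h]
  have identification (q : ℝ) : ∫ ω, (if A ω = a then (1 : ℝ) else 0) / e ω *
      ((if Ytilde ω ≤ q then (1 : ℝ) else 0) - τ) ∂μ = (μ {ω | Ya ω ≤ q}).toReal - τ := by
    set T := Ya ⁻¹' Set.Iic q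
    have hST := (condIndepFun_iff_condExp_inter_preimage_eq_mul hA hYa).mp hNUC
      {a} (Set.Iic q) (measurableSet_singleton a) measurableSet_Iic
    have hweighted : (fun ω ↦ (if A ω = a then (1 : ℝ) else 0) / e ω *
        ((if Ytilde ω ≤ q then (1 : ℝ) else 0) - τ))
        =ᵐ[μ] fun ω ↦ S.indicator 1 ω * (T.indicator 1 - fun _ ↦ τ : Ω → ℝ) ω / e ω := by
      filter_upwards [hcons] with ω hω
      by_cases h : A ω = a
      · simp only [Set.indicator, S, T, Set.mem_preimage, Set.mem_singleton_iff, Set.mem_Iic,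
          Pi.sub_apply, Pi.one_apply, h, hω h, if_true]
        ring
      · simp [S, h]
    rw [integral_congr_ae hweighted, he_S,
      integral_indicator_mul_indicator_sub_const_div_condExp hle (hA (measurableSet_singleton a))
        (hYa measurableSet_Iic) hST hε (he_S ▸ hεe) τ]
    rfl
  exact ⟨identification, fun qτ hq ↦ by rw [identification qτ, hq, sub_self]⟩

theorem iptw_quantile_identification_point_treatment
    {Ω : Type*} [MeasurableSpace Ω] [StandardBorelSpace Ω]
    (μ : Measure Ω) [IsProbabilityMeasure μ]
    {p : ℕ} (L : Ω → (Fin p → ℝ)) (A : Ω → Bool) (a : Bool)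
    (Ytilde Ya : Ω → ℝ) (τ : ℝ) (hτ : τ ∈ Set.Ioo (0 : ℝ) 1)
    (hL : Measurable L) (hA : Measurable A) (hYt : Measurable Ytilde) (hYa : Measurable Ya)
    (hle : MeasurableSpace.comap L inferInstance ≤ (inferInstance : MeasurableSpace Ω))
    -- (i) no unmeasured confounding: A ⊥ Ỹ^(a) | L
    (hNUC : CondIndepFun (MeasurableSpace.comap L inferInstance) hle A Ya μ)
    -- (ii) consistency: on {A = a}, Ỹ = Ỹ^(a)
    (hcons : ∀ᵐ ω ∂μ, A ω = a → Ytilde ω = Ya ω)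
    -- the propensity score P(A = a | L) as a conditional expectation given σ(L)
    (e : Ω → ℝ)
    (he : e = μ[(fun ω => if A ω = a then (1 : ℝ) else 0) |
          MeasurableSpace.comap L inferInstance])
    -- (iii) positivity: P(A = a | L) ≥ ε > 0 a.s.
    (hpos : ∃ ε : ℝ, 0 < ε ∧ ∀ᵐ ω ∂μ, ε ≤ e ω) :
    (∀ q : ℝ,
      ∫ ω, (if A ω = a then (1 : ℝ) else 0) / e ω *
          ((if Ytilde ω ≤ q then (1 : ℝ) else 0) - τ) ∂μ
        = (μ {ω | Ya ω ≤ q}).toReal - τ) ∧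
    (∀ qτ : ℝ, (μ {ω | Ya ω ≤ qτ}).toReal = τ →
      ∫ ω, (if A ω = a then (1 : ℝ) else 0) / e ω *
          ((if Ytilde ω ≤ qτ then (1 : ℝ) else 0) - τ) ∂μ = 0) :=
  iptw_quantile_identification_point_treatment_general μ L A a Ytilde Ya τ hA hYa hle hNUC hcons e
    he hpos
end

section
/- (Sequential factorization.) In a two-period setting, suppose for k = 0, 1 that A_k is conditionally independent of (L̄^(ā), Ỹ^(ā)) given (Ā_{k−1} = ā_{k−1}, L̄_k), and consistency holds. Then on the event Ā_1 = ā_1, P(A_0 = a_0, A_1 = a_1 | L̄^(ā), Ỹ^(ā)) = P(A_0 = a_0 | L_0) · P(A_1 = a_1 | A_0 = a_0, L̄_1). -/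
/-!
Write `G = σ(L₀, L₁^(a₀), Ỹ^(ā))`. By ignorability at time 1, `P(A₁ = a₁ | A₀, L̄₁)` is also the
conditional probability of `{A₁ = a₁}` given `σ(A₀, L̄₁) ∨ G`. By Doob–Dynkin it equals
`h(A₀, L₀, L₁)`, which by consistency agrees on `{A₀ = a₀}` with the `G`-measurable
`φ = h(a₀, L₀, L₁^(a₀))`. Conditioning `1{A₀ = a₀} 1{A₁ = a₁}` first on `σ(A₀, L̄₁) ∨ G` and then
on `G` therefore gives `φ · P(A₀ = a₀ | G)`, and ignorability at time 0 turns `P(A₀ = a₀ | G)`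
into `P(A₀ = a₀ | L₀)`.
-/

open MeasureTheory ProbabilityTheory MeasurableSpace

theorem IsPiSystem.image2_inter {α : Type*} {C D : Set (Set α)} (hC : IsPiSystem C)
    (hD : IsPiSystem D) : IsPiSystem (Set.image2 (· ∩ ·) C D) := by
  rintro _ ⟨a, ha, b, hb, rfl⟩ _ ⟨c, hc, d, hd, rfl⟩ hne
  rw [Set.inter_inter_inter_comm] at hne ⊢
  exact ⟨a ∩ c, hC a ha c hc hne.left, b ∩ d, hD b hb d hd hne.right, rfl⟩

theorem MeasurableSpace.sup_eq_generateFrom_image2_inter {α : Type*} (m₁ m₂ : MeasurableSpace α) :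
    m₁ ⊔ m₂ = generateFrom
      (Set.image2 (· ∩ ·) {s | MeasurableSet[m₁] s} {t | MeasurableSet[m₂] t}) := by
  refine le_antisymm (sup_le ?_ ?_) (generateFrom_le ?_)
  · exact fun s hs => measurableSet_generateFrom ⟨s, hs, Set.univ, .univ, Set.inter_univ s⟩
  · exact fun t ht => measurableSet_generateFrom ⟨Set.univ, .univ, t, ht, Set.univ_inter t⟩
  · rintro _ ⟨s, hs, t, ht, rfl⟩
    exact (le_sup_left (b := m₂) s hs).inter (le_sup_right (a := m₁) t ht)

section

variable {Ω E : Type*} {mΩ : MeasurableSpace Ω} {μ : Measure Ω}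
  [NormedAddCommGroup E] [NormedSpace ℝ E]

theorem setIntegral_eq_of_forall_inter_of_measurableSet_sup {m₁ m₂ : MeasurableSpace Ω}
    (hm₁ : m₁ ≤ mΩ) (hm₂ : m₂ ≤ mΩ) {f g : Ω → E} (hf : Integrable f μ) (hg : Integrable g μ)
    (h : ∀ s t, MeasurableSet[m₁] s → MeasurableSet[m₂] t →
      ∫ x in s ∩ t, f x ∂μ = ∫ x in s ∩ t, g x ∂μ)
    {U : Set Ω} (hU : MeasurableSet[m₁ ⊔ m₂] U) : ∫ x in U, f x ∂μ = ∫ x in U, g x ∂μ := by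
  have hm : m₁ ⊔ m₂ ≤ mΩ := sup_le hm₁ hm₂
  induction U, hU using induction_on_inter (sup_eq_generateFrom_image2_inter m₁ m₂)
    ((@isPiSystem_measurableSet _ m₁).image2_inter (@isPiSystem_measurableSet _ m₂)) with
  | empty => simp
  | basic _ hst =>
    obtain ⟨s, hs, t, ht, rfl⟩ := hst
    exact h s t hs ht
  | compl U hU ih =>
    have hfU := integral_add_compl (hm U hU) hf
    have hgU := integral_add_compl (hm U hU) hg
    have huniv := h Set.univ Set.univ .univ .univ
    simp only [Set.inter_univ, Measure.restrict_univ] at huniv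
    rw [← eq_sub_iff_add_eq'] at hfU hgU
    rw [hfU, hgU, ih, huniv]
  | iUnion F hdisj hF ih =>
    rw [integral_iUnion (fun i => hm _ (hF i)) hdisj hf.integrableOn,
      integral_iUnion (fun i => hm _ (hF i)) hdisj hg.integrableOn]
    exact tsum_congr ih

theorem ProbabilityTheory.CondIndep.condExp_indicator_sup_right_ae_eq [StandardBorelSpace Ω]
    [IsFiniteMeasure μ] {m' m₁ m₂ : MeasurableSpace Ω} {hm' : m' ≤ mΩ} (hm₁ : m₁ ≤ mΩ)
    (hm₂ : m₂ ≤ mΩ) (h : CondIndep m' m₁ m₂ hm' μ) {s : Set Ω} (hs : MeasurableSet[m₁] s) :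
    μ⟦s | m' ⊔ m₂⟧ =ᵐ[μ] μ⟦s | m'⟧ := by
  have h_mul := (condIndep_iff m' m₁ m₂ hm' hm₁ hm₂ μ).mp h s
  have hsΩ : MeasurableSet[mΩ] s := hm₁ s hs
  have hs_int : Integrable (s.indicator fun _ => (1 : ℝ)) μ := (integrable_const 1).indicator hsΩ
  refine (ae_eq_condExp_of_forall_setIntegral_eq (sup_le hm' hm₂) hs_int
    (fun _ _ _ => integrable_condExp.integrableOn) (fun U hU _ => ?_)
    (stronglyMeasurable_condExp.mono le_sup_left).aestronglyMeasurable).symm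
  -- Over `u ∩ t` with `u ∈ m'`, `t ∈ m₂`, both sides integrate to `μ (u ∩ t ∩ s)`: pull
  -- `μ⟦s | m'⟧` out of `μ[μ⟦s | m'⟧ * 1_t | m']` and use conditional independence.
  refine setIntegral_eq_of_forall_inter_of_measurableSet_sup hm' hm₂ integrable_condExp hs_int
    (fun u t hu ht => ?_) hU
  have htΩ : MeasurableSet[mΩ] t := hm₂ t ht
  have ht_int : Integrable (t.indicator fun _ => (1 : ℝ)) μ := (integrable_const 1).indicator htΩ
  have h_ind : t.indicator (μ⟦s | m'⟧) = (μ⟦s | m'⟧) * t.indicator fun _ => 1 := by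
    ext x; by_cases hx : x ∈ t <;> simp [hx]
  have h_int : Integrable ((μ⟦s | m'⟧) * t.indicator fun _ => 1) μ :=
    h_ind ▸ integrable_condExp.indicator htΩ
  calc ∫ x in u ∩ t, (μ⟦s | m'⟧) x ∂μ
      = ∫ x in u, ((μ⟦s | m'⟧) * t.indicator fun _ => (1 : ℝ)) x ∂μ := by
        rw [← h_ind, setIntegral_indicator htΩ]
    _ = ∫ x in u, (μ[(μ⟦s | m'⟧) * t.indicator fun _ => 1 | m']) x ∂μ :=
        (setIntegral_condExp hm' h_int hu).symm
    _ = ∫ x in u, (μ⟦s ∩ t | m'⟧) x ∂μ := by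
        refine setIntegral_congr_ae (hm' u hu) ?_
        filter_upwards [condExp_mul_of_stronglyMeasurable_left stronglyMeasurable_condExp
          h_int ht_int, h_mul t hs ht] with x hx hx' _
        rw [hx, hx']
    _ = ∫ x in u ∩ t, s.indicator (fun _ => (1 : ℝ)) x ∂μ := by
        rw [setIntegral_condExp hm' ((integrable_const 1).indicator (hsΩ.inter htΩ)) hu,
          Set.inter_comm, ← Set.indicator_indicator, setIntegral_indicator htΩ]

theorem condExp_indicator_inter_ae_eq_mul [IsFiniteMeasure μ] {m₁ m₂ : MeasurableSpace Ω}
    (hm₁ : m₁ ≤ mΩ) (hm₂ : m₂ ≤ mΩ) {s t : Set Ω} (hs : MeasurableSet[m₁] s)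
    (ht : MeasurableSet[mΩ] t) {φ : Ω → ℝ} (hφ : StronglyMeasurable[m₂] φ)
    (h_sup : μ⟦t | m₁ ⊔ m₂⟧ =ᵐ[μ] μ⟦t | m₁⟧)
    (h_φ : ∀ᵐ ω ∂μ, ω ∈ s → (μ⟦t | m₁⟧) ω = φ ω) :
    μ⟦s ∩ t | m₂⟧ =ᵐ[μ] φ * μ⟦s | m₂⟧ := by
  have hsΩ : MeasurableSet[mΩ] s := hm₁ s hs
  have h_ind : s.indicator φ = φ * s.indicator fun _ => 1 := by
    ext x; by_cases hx : x ∈ s <;> simp [hx]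
  have h_eq_on : s.indicator (μ⟦t | m₁⟧) =ᵐ[μ] s.indicator φ := by
    filter_upwards [h_φ] with ω hω
    by_cases hs : ω ∈ s <;> simp [hs, hω]
  have hφ_int : Integrable (φ * s.indicator fun _ => 1) μ :=
    h_ind ▸ (integrable_condExp.indicator hsΩ).congr h_eq_on
  calc μ⟦s ∩ t | m₂⟧
      =ᵐ[μ] μ[μ[s.indicator (t.indicator fun _ => 1) | m₁ ⊔ m₂] | m₂] := by
        rw [Set.indicator_indicator]
        exact (condExp_condExp_of_le le_sup_right (sup_le hm₁ hm₂)).symm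
    _ =ᵐ[μ] μ[s.indicator (μ⟦t | m₁ ⊔ m₂⟧) | m₂] :=
        condExp_congr_ae (condExp_indicator ((integrable_const 1).indicator ht)
          (le_sup_left (b := m₂) s hs))
    _ =ᵐ[μ] μ[φ * s.indicator fun _ => 1 | m₂] :=
        condExp_congr_ae (h_ind ▸ (h_sup.indicator (s := s)).trans h_eq_on)
    _ =ᵐ[μ] φ * μ⟦s | m₂⟧ :=
        condExp_mul_of_stronglyMeasurable_left hφ hφ_int ((integrable_const 1).indicator hsΩ)

theorem Measurable.exists_stronglyMeasurable_ae_eq_on {β : Type*} [mβ : MeasurableSpace β]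
    {m : MeasurableSpace Ω} {W W' : Ω → β} {g : Ω → ℝ} (hg : Measurable[mβ.comap W] g)
    (hW' : Measurable[m] W') {s : Set Ω} (h_eq : ∀ᵐ ω ∂μ, ω ∈ s → W ω = W' ω) :
    ∃ φ : Ω → ℝ, StronglyMeasurable[m] φ ∧ ∀ᵐ ω ∂μ, ω ∈ s → g ω = φ ω := by
  obtain ⟨h, hh, rfl⟩ := hg.exists_eq_measurable_comp
  refine ⟨h ∘ W', (hh.comp hW').stronglyMeasurable, ?_⟩
  filter_upwards [h_eq] with ω hω hs
  simp [hω hs]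

theorem ae_condExp_inter_eq_mul_of_condIndep [StandardBorelSpace Ω] [IsFiniteMeasure μ]
    {F₀ F₁ G M₀ M₁ : MeasurableSpace Ω} {hF₀ : F₀ ≤ mΩ} {hF₁ : F₁ ≤ mΩ} (hG : G ≤ mΩ)
    (hM₀ : M₀ ≤ mΩ) (hM₁ : M₁ ≤ mΩ) (hF₀G : F₀ ≤ G)
    (h₀ : CondIndep F₀ M₀ G hF₀ μ) (h₁ : CondIndep F₁ M₁ G hF₁ μ) {s₀ s₁ : Set Ω}
    (hs₀ : MeasurableSet[M₀] s₀) (hs₀F₁ : MeasurableSet[F₁] s₀) (hs₁ : MeasurableSet[M₁] s₁)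
    {φ : Ω → ℝ} (hφ : StronglyMeasurable[G] φ) (h_φ : ∀ᵐ ω ∂μ, ω ∈ s₀ → (μ⟦s₁ | F₁⟧) ω = φ ω) :
    ∀ᵐ ω ∂μ, ω ∈ s₀ → (μ⟦s₀ ∩ s₁ | G⟧) ω = (μ⟦s₀ | F₀⟧) ω * (μ⟦s₁ | F₁⟧) ω := by
  have h_s₀ : μ⟦s₀ | G⟧ =ᵐ[μ] μ⟦s₀ | F₀⟧ := by
    simpa only [sup_eq_right.mpr hF₀G] using h₀.condExp_indicator_sup_right_ae_eq hM₀ hG hs₀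
  have h_fac := condExp_indicator_inter_ae_eq_mul hF₁ hG hs₀F₁ (hM₁ s₁ hs₁) hφ
    (h₁.condExp_indicator_sup_right_ae_eq hM₁ hG hs₁) h_φ
  filter_upwards [h_fac, h_s₀, h_φ] with ω h_fac h_s₀ h_φ hω
  rw [h_fac, Pi.mul_apply, h_s₀, h_φ hω, mul_comm]

end

theorem sequential_factorization_two_periods_general
    {Ω : Type*} [MeasurableSpace Ω] [StandardBorelSpace Ω]
    (μ : Measure Ω) [IsProbabilityMeasure μ]
    (L0 L1 : Ω → ℝ) (A0 A1 : Ω → Bool) (a0 a1 : Bool)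
    -- potential covariate L₁^(a₀) and potential composite outcome Ỹ^(ā) under ā = (a₀, a₁)
    (L1a : Ω → ℝ) (Yt : Ω → ℝ)
    (hL0 : Measurable L0) (hA0 : Measurable A0) (hA1 : Measurable A1)
    (hL1a : Measurable L1a) (hYt : Measurable Yt)
    (hle0 : MeasurableSpace.comap L0 inferInstance ≤ (inferInstance : MeasurableSpace Ω))
    (hle1 : MeasurableSpace.comap (fun ω => (A0 ω, L0 ω, L1 ω)) inferInstance
        ≤ (inferInstance : MeasurableSpace Ω))
    -- sequential ignorability at time 0: A₀ ⊥ (L̄^(ā), Ỹ^(ā)) | L₀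
    (hNUC0 : CondIndepFun (MeasurableSpace.comap L0 inferInstance) hle0
        A0 (fun ω => (L0 ω, L1a ω, Yt ω)) μ)
    -- sequential ignorability at time 1: A₁ ⊥ (L̄^(ā), Ỹ^(ā)) | A₀, L₀, L₁
    (hNUC1 : CondIndepFun (MeasurableSpace.comap (fun ω => (A0 ω, L0 ω, L1 ω)) inferInstance)
        hle1 A1 (fun ω => (L0 ω, L1a ω, Yt ω)) μ)
    -- consistency: on {A₀ = a₀}, L₁ = L₁^(a₀)
    (hcons : ∀ᵐ ω ∂μ, A0 ω = a0 → L1 ω = L1a ω) :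
    -- on the event Ā₁ = ā₁:
    ∀ᵐ ω ∂μ, A0 ω = a0 → A1 ω = a1 →
      (μ[(fun ω' => if A0 ω' = a0 ∧ A1 ω' = a1 then (1 : ℝ) else 0) |
          MeasurableSpace.comap (fun ω' => (L0 ω', L1a ω', Yt ω')) inferInstance]) ω
        = (μ[(fun ω' => if A0 ω' = a0 then (1 : ℝ) else 0) |
            MeasurableSpace.comap L0 inferInstance]) ω *
          (μ[(fun ω' => if A1 ω' = a1 then (1 : ℝ) else 0) |
            MeasurableSpace.comap (fun ω' => (A0 ω', L0 ω', L1 ω')) inferInstance]) ω := by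
  have h_ite : ∀ (p : Ω → Prop) [DecidablePred p],
      (fun ω => if p ω then (1 : ℝ) else 0) = {ω | p ω}.indicator fun _ => 1 := fun p _ => by
    ext ω; by_cases hp : p ω <;> simp [hp]
  rw [h_ite, h_ite, h_ite, Set.ofPred_and]
  have hZ : Measurable fun ω => (L0 ω, L1a ω, Yt ω) := by fun_prop
  have h_cons : ∀ᵐ ω ∂μ, ω ∈ {ω | A0 ω = a0} → (A0 ω, L0 ω, L1 ω) = (a0, L0 ω, L1a ω) :=
    hcons.mono fun ω hω hA => by rw [show A0 ω = a0 from hA, hω hA]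
  have hW' : Measurable[MeasurableSpace.comap (fun ω => (L0 ω, L1a ω, Yt ω)) inferInstance]
      fun ω => (a0, L0 ω, L1a ω) :=
    (measurable_const.prodMk (measurable_fst.prodMk measurable_snd.fst)).comp
      (comap_measurable _)
  obtain ⟨φ, hφ, h_subst⟩ :=
    (stronglyMeasurable_condExp (μ := μ) (f := {ω | A1 ω = a1}.indicator fun _ => (1 : ℝ))
      (m := MeasurableSpace.comap (fun ω => (A0 ω, L0 ω, L1 ω)) inferInstance)).measurable
      |>.exists_stronglyMeasurable_ae_eq_on hW' h_cons
  filter_upwards [ae_condExp_inter_eq_mul_of_condIndep hZ.comap_le hA0.comap_le hA1.comap_le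
    (measurable_fst.comp (comap_measurable _)).comap_le
    ((condIndepFun_iff_condIndep _ _ _ _ _).mp hNUC0)
    ((condIndepFun_iff_condIndep _ _ _ _ _).mp hNUC1) ⟨{a0}, measurableSet_singleton a0, rfl⟩
    ⟨Prod.fst ⁻¹' {a0}, measurable_fst (measurableSet_singleton a0), rfl⟩
    ⟨{a1}, measurableSet_singleton a1, rfl⟩ hφ h_subst] with ω h hA0 _ using h hA0

theorem sequential_factorization_two_periods
    {Ω : Type*} [MeasurableSpace Ω] [StandardBorelSpace Ω]
    (μ : Measure Ω) [IsProbabilityMeasure μ]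
    (L0 L1 : Ω → ℝ) (A0 A1 : Ω → Bool) (a0 a1 : Bool)
    -- potential covariate L₁^(a₀) and potential composite outcome Ỹ^(ā) under ā = (a₀, a₁)
    (L1a : Ω → ℝ) (Yt : Ω → ℝ)
    (hL0 : Measurable L0) (hL1 : Measurable L1) (hA0 : Measurable A0) (hA1 : Measurable A1)
    (hL1a : Measurable L1a) (hYt : Measurable Yt)
    (hle0 : MeasurableSpace.comap L0 inferInstance ≤ (inferInstance : MeasurableSpace Ω))
    (hle1 : MeasurableSpace.comap (fun ω => (A0 ω, L0 ω, L1 ω)) inferInstance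
        ≤ (inferInstance : MeasurableSpace Ω))
    -- sequential ignorability at time 0: A₀ ⊥ (L̄^(ā), Ỹ^(ā)) | L₀
    (hNUC0 : CondIndepFun (MeasurableSpace.comap L0 inferInstance) hle0
        A0 (fun ω => (L0 ω, L1a ω, Yt ω)) μ)
    -- sequential ignorability at time 1: A₁ ⊥ (L̄^(ā), Ỹ^(ā)) | A₀, L₀, L₁
    (hNUC1 : CondIndepFun (MeasurableSpace.comap (fun ω => (A0 ω, L0 ω, L1 ω)) inferInstance)
        hle1 A1 (fun ω => (L0 ω, L1a ω, Yt ω)) μ)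
    -- consistency: on {A₀ = a₀}, L₁ = L₁^(a₀)
    (hcons : ∀ᵐ ω ∂μ, A0 ω = a0 → L1 ω = L1a ω) :
    -- on the event Ā₁ = ā₁:
    ∀ᵐ ω ∂μ, A0 ω = a0 → A1 ω = a1 →
      (μ[(fun ω' => if A0 ω' = a0 ∧ A1 ω' = a1 then (1 : ℝ) else 0) |
          MeasurableSpace.comap (fun ω' => (L0 ω', L1a ω', Yt ω')) inferInstance]) ω
        = (μ[(fun ω' => if A0 ω' = a0 then (1 : ℝ) else 0) |
            MeasurableSpace.comap L0 inferInstance]) ω *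
          (μ[(fun ω' => if A1 ω' = a1 then (1 : ℝ) else 0) |
            MeasurableSpace.comap (fun ω' => (A0 ω', L0 ω', L1 ω')) inferInstance]) ω :=
  sequential_factorization_two_periods_general μ L0 L1 A0 A1 a0 a1 L1a Yt hL0 hA0 hA1 hL1a hYt hle0
    hle1 hNUC0 hNUC1 hcons
end
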